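/- Let ζ be any primitive 7th root of unity in ℂ. Then there exists ε ∈ {1, −1} such that ∏_{a ∈ (ℤ/7ℤ)ˣ} (X − (a|7)·ζ^a) = X⁶ + εi√7·X⁵ − 3X⁴ − εi√7·X³ + 3X² + εi√7·X − 1, where i√7 denotes a fixed complex square root of −7. -/
import Mathlib


open Polynomial

instance : Fact (Nat.Prime 7) := ⟨by norm_num⟩

/-- Let ζ be any primitive 7th root of unity in ℂ. Then there exists
ε ∈ {1, −1} such that ∏_{a ∈ (ℤ/7ℤ)ˣ} (X − (a|7)·ζ^a)
= X⁶ + εi√7·X⁵ − 3X⁴ − εi√7·X³ + 3X² + εi√7·X − 1, where i√7 is a fixed complex square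
root of −7. -/
theorem stmt_13 (w : ℂ) (hw : w ^ 2 = -7) (ζ : ℂ) (hζ : IsPrimitiveRoot ζ 7) :
    ∃ ε : ℂ, (ε = 1 ∨ ε = -1) ∧
      ∏ a ∈ (Finset.range 7).filter (fun a => Nat.Coprime a 7),
        (X - C ((legendreSym 7 (a : ℤ) : ℂ) * ζ ^ a)) =
      X ^ 6 + C (ε * w) * X ^ 5 - C 3 * X ^ 4 - C (ε * w) * X ^ 3 + C 3 * X ^ 2 +
        C (ε * w) * X - 1 := by
  have h7 : ζ ^ 7 = 1 := hζ.pow_eq_one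
  have hsum : ζ ^ 6 + ζ ^ 5 + ζ ^ 4 + ζ ^ 3 + ζ ^ 2 + ζ + 1 = 0 := by
    have := hζ.geom_sum_eq_zero (by norm_num)
    simp only [Finset.sum_range_succ, Finset.sum_range_zero, zero_add] at this
    linear_combination this
  set g : ℂ := ζ + ζ ^ 2 + ζ ^ 4 - ζ ^ 3 - ζ ^ 5 - ζ ^ 6 with hg_def
  have hg2 : g ^ 2 = -7 := by
    linear_combination (-6 + ζ - ζ ^ 3 + 2 * ζ ^ 4 + ζ ^ 5) * h7 + hsum
  have hw0 : w ≠ 0 := by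
    intro h
    rw [h] at hw
    norm_num at hw
  refine ⟨-g / w, ?_, ?_⟩
  · have hsq : (-g / w) ^ 2 = 1 := by
      field_simp
      rw [hg2, hw]
    have : (-g / w - 1) * (-g / w + 1) = 0 := by linear_combination hsq
    rcases mul_eq_zero.mp this with h | h
    · left; linear_combination h
    · right; linear_combination h
  · have hεw : -g / w * w = -g := by field_simp
    rw [hεw]
    have hset : (Finset.range 7).filter (fun a => Nat.Coprime a 7) = {1, 2, 3, 4, 5, 6} := by
      decide
    rw [hset]
    have l1 : legendreSym 7 ((1 : ℕ) : ℤ) = 1 := by decide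
    have l2 : legendreSym 7 ((2 : ℕ) : ℤ) = 1 := by decide
    have l3 : legendreSym 7 ((3 : ℕ) : ℤ) = -1 := by decide
    have l4 : legendreSym 7 ((4 : ℕ) : ℤ) = 1 := by decide
    have l5 : legendreSym 7 ((5 : ℕ) : ℤ) = -1 := by decide
    have l6 : legendreSym 7 ((6 : ℕ) : ℤ) = -1 := by decide
    rw [show ({1, 2, 3, 4, 5, 6} : Finset ℕ) = {1, 2, 3, 4, 5, 6} from rfl]
    rw [Finset.prod_insert (by decide), Finset.prod_insert (by decide),
      Finset.prod_insert (by decide), Finset.prod_insert (by decide),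
      Finset.prod_insert (by decide), Finset.prod_singleton]
    rw [l1, l2, l3, l4, l5, l6]
    push_cast
    apply Polynomial.funext
    intro x
    simp only [eval_mul, eval_add, eval_sub, eval_pow, eval_C, eval_X, eval_one, eval_neg,
      eval_ofNat]
    linear_combination ((-1 + 3 * x ^ 2 - 3 * x ^ 4)
      + (-x + x ^ 3) * ζ
      + (-x + x ^ 3) * ζ ^ 2
      + (x - x ^ 3 - x ^ 4) * ζ ^ 3
      + (-x + x ^ 3 + x ^ 4) * ζ ^ 4
      + (x - x ^ 3) * ζ ^ 5
      + (x - 2 * x ^ 3) * ζ ^ 6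
      + (-1 + 3 * x ^ 2 + x ^ 3) * ζ ^ 7
      + (-x - x ^ 3) * ζ ^ 8
      + (-x) * ζ ^ 9
      + (x + x ^ 2) * ζ ^ 10
      + (-x - x ^ 2) * ζ ^ 11
      + x * ζ ^ 12
      + x * ζ ^ 13
      + (-1) * ζ ^ 14) * h7
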